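/- arXiv:1403.0123 — 2 statements merged into one kernel-verified Lean document; each statement's English description precedes it below -/
import Mathlib

section
/- Let (R, 𝔪) be a Noetherian local ring, let I be an 𝔪-primary ideal of R, and let J be a reduction of I. Then the Łojasiewicz exponents of I and J coincide: ℒ(I) = ℒ(J). -/
/-- `J` is a reduction of `I`: `J ⊆ I` and `I^(r+1) = J·I^r` for some integer `r > 0`. -/
def IsReductionOf {R : Type*} [CommRing R] (J I : Ideal R) : Prop :=
  J ≤ I ∧ ∃ r : ℕ, 0 < r ∧ I ^ (r + 1) = J * I ^ r

/-- The integral closure of an ideal `I`: the set of all `x ∈ R` satisfying an equation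
`x^k + a₁ x^(k-1) + ⋯ + a_k = 0` with `aᵢ ∈ Iⁱ`. -/
def intClosure {R : Type*} [CommRing R] (I : Ideal R) : Set R :=
  {x | ∃ (k : ℕ) (a : ℕ → R), 0 < k ∧ (∀ i ∈ Finset.Icc 1 k, a i ∈ I ^ i) ∧
      x ^ k + ∑ i ∈ Finset.Icc 1 k, a i * x ^ (k - i) = 0}

/-- The Łojasiewicz exponent `ℒ(I)` of an ideal `I` with respect to the ideal `𝔪`:
the infimum of the set of rationals `p/q` (`p, q` positive integers) such that
`𝔪^p ⊆ closure(I^q)` (integral closure). -/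
noncomputable def lojExp {R : Type*} [CommRing R] (m I : Ideal R) : ℝ :=
  sInf {x : ℝ | ∃ p q : ℕ, 0 < p ∧ 0 < q ∧ x = (p : ℝ) / (q : ℝ) ∧
    ((m ^ p : Ideal R) : Set R) ⊆ intClosure (I ^ q)}

/-!
If `x` is integral over `I^q`, then `I^q` is a reduction of `I^q + (x)`; as `J^q` is a reduction
of `I^q`, transitivity makes `J^q` a reduction of `I^q + (x)`. Conversely, every element of an
ideal `M` is integral over any reduction `K` of `M`: Cayley–Hamilton applied to multiplication by
`x` on the finitely generated ideal `M^r`, where `x M^r ⊆ M^(r+1) = K M^r`. Hence `I^q` and `J^q`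
have the same integral closure for every `q`, and the sets defining the two exponents coincide.
-/

section

open Polynomial

variable {R : Type*} [CommRing R]

namespace Ideal

variable {I J : Ideal R} {r n : ℕ}

theorem pow_succ_eq_mul_pow_of_le (h : I ^ (r + 1) = J * I ^ r) (hn : r ≤ n) :
    I ^ (n + 1) = J * I ^ n := by
  obtain ⟨t, rfl⟩ := Nat.exists_eq_add_of_le hn
  rw [add_right_comm, pow_add, h, mul_assoc, ← pow_add]

theorem pow_add_eq_pow_mul_pow_of_le (h : I ^ (r + 1) = J * I ^ r) (hn : r ≤ n) (s : ℕ) :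
    I ^ (n + s) = J ^ s * I ^ n := by
  induction s with
  | zero => simp
  | succ s ih =>
    rw [← add_assoc, pow_succ_eq_mul_pow_of_le h (by omega), ih, ← mul_assoc, pow_succ']

end Ideal

namespace IsReductionOf

variable {I J K : Ideal R}

theorem exists_pow_add_eq (h : IsReductionOf J I) :
    ∃ r, 0 < r ∧ ∀ n, r ≤ n → ∀ s, I ^ (n + s) = J ^ s * I ^ n :=
  let ⟨_, r, hr, hI⟩ := h
  ⟨r, hr, fun _ hn => Ideal.pow_add_eq_pow_mul_pow_of_le hI hn⟩

theorem pow (h : IsReductionOf J I) {q : ℕ} (hq : 0 < q) : IsReductionOf (J ^ q) (I ^ q) := by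
  obtain ⟨r, hr, hI⟩ := h.exists_pow_add_eq
  refine ⟨Ideal.pow_right_mono h.1 q, r, hr, ?_⟩
  rw [← pow_mul, ← pow_mul, mul_add_one, hI _ (Nat.le_mul_of_pos_left r hq)]

theorem trans (hJ : IsReductionOf J I) (hK : IsReductionOf K J) : IsReductionOf K I := by
  obtain ⟨a, ha, hI⟩ := hJ.exists_pow_add_eq
  obtain ⟨b, -, hJ'⟩ := hK.exists_pow_add_eq
  refine ⟨hK.1.trans hJ.1, a + b, by omega, ?_⟩
  calc I ^ (a + b + 1) = J ^ (b + 1) * I ^ a := by rw [add_assoc, hI a le_rfl]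
    _ = K * I ^ (a + b) := by rw [hJ' b le_rfl 1, hI a le_rfl, pow_one, mul_assoc]

end IsReductionOf

theorem mem_intClosure_of_monic {K : Ideal R} {x : R} {g : R[X]} (hm : g.Monic)
    (h0 : 0 < g.natDegree) (hc : ∀ i, g.coeff i ∈ K ^ (g.natDegree - i))
    (he : g.eval x = 0) : x ∈ intClosure K := by
  set k := g.natDegree
  refine ⟨k, fun i => g.coeff (k - i), h0, fun i hi => ?_, ?_⟩
  · simpa [Nat.sub_sub_self (Finset.mem_Icc.mp hi).2] using hc (k - i)
  · have hsum : ∑ i ∈ Finset.Icc 1 k, g.coeff (k - i) * x ^ (k - i)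
        = ∑ j ∈ Finset.range k, g.coeff j * x ^ j := by
      refine Finset.sum_nbij' (k - ·) (k - ·) ?_ ?_ ?_ ?_ (fun _ _ => rfl) <;>
        intro i hi <;> simp only [Finset.mem_Icc, Finset.mem_range] at hi ⊢ <;> omega
    rw [hsum, ← he, eval_eq_sum_range, Finset.sum_range_succ, hm.coeff_natDegree, one_mul,
      add_comm]

theorem exists_monic_coeff_mem_pow_eval_mul_eq_zero {K N : Ideal R} (hN : N.FG) {x : R}
    (hx : ∀ y ∈ N, x * y ∈ K * N) :
    ∃ p : R[X], p.Monic ∧ (∀ i, p.coeff i ∈ K ^ (p.natDegree - i)) ∧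
      ∀ y ∈ N, p.eval x * y = 0 := by
  have : Module.Finite R N := Module.Finite.iff_fg.mpr hN
  have hmaps : ∀ y ∈ N, LinearMap.lsmul R R x y ∈ N := fun y hy => N.mul_mem_left x hy
  let f : Module.End R N := (LinearMap.lsmul R R x).restrict hmaps
  have hf : f = algebraMap R (Module.End R N) x := by ext; rfl
  have hrange : LinearMap.range f ≤ K • ⊤ := by
    rintro _ ⟨y, rfl⟩
    rw [Submodule.mem_smul_top_iff]
    exact hx y y.2
  obtain ⟨p, hmon, -, hcoeff, hp⟩ :=
    LinearMap.exists_monic_and_natDegree_eq_and_coeff_mem_pow_and_aeval_eq_zero R f K hrange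
  refine ⟨p, hmon, hcoeff, fun y hy => ?_⟩
  rw [hf, aeval_algebraMap_apply, coe_aeval_eq_eval] at hp
  simpa using congrArg (fun g : Module.End R N => (g ⟨y, hy⟩ : R)) hp

theorem mem_intClosure_of_isReductionOf {K M : Ideal R} (hM : M.FG) (h : IsReductionOf K M)
    {x : R} (hx : x ∈ M) : x ∈ intClosure K := by
  obtain ⟨-, r, hr, hMr⟩ := h
  obtain ⟨p, hmon, hcoeff, hp⟩ := exists_monic_coeff_mem_pow_eval_mul_eq_zero (hM.pow (n := r))
    fun y hy => by rw [← hMr, pow_succ']; exact Ideal.mul_mem_mul hx hy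
  cases subsingleton_or_nontrivial R
  · exact ⟨1, 0, one_pos, fun _ _ => zero_mem _, Subsingleton.elim _ _⟩
  -- `p * X ^ r` has positive degree as `0 < r`, and vanishes at `x` because `x ^ r ∈ M ^ r`.
  have hdeg : (p * X ^ r).natDegree = p.natDegree + r := by
    rw [hmon.natDegree_mul (monic_X_pow r), natDegree_X_pow]
  refine mem_intClosure_of_monic (hmon.mul (monic_X_pow r)) (by omega) (fun i => ?_) ?_
  · rw [hdeg, coeff_mul_X_pow']
    split_ifs
    · simpa [show p.natDegree + r - i = p.natDegree - (i - r) by omega] using hcoeff (i - r)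
    · exact zero_mem _
  · simpa using hp _ (Ideal.pow_mem_pow hx r)

open Ideal in
theorem Ideal.sup_span_singleton_pow_succ_le (L : Ideal R) (x : R) (j : ℕ) :
    (L ⊔ span {x}) ^ (j + 1) ≤ L * (L ⊔ span {x}) ^ j ⊔ span {x ^ (j + 1)} := by
  set M := L ⊔ span {x}
  induction j with
  | zero => simp [M]
  | succ j ih =>
    have hxM : span {x ^ (j + 1)} ≤ M ^ (j + 1) := by
      rw [← span_singleton_pow]; exact pow_right_mono le_sup_right _
    have hxL : span {x ^ (j + 1)} * L ≤ L * M ^ (j + 1) := mul_comm L _ ▸ mul_mono_right hxM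
    calc M ^ (j + 2) ≤ (L * M ^ j ⊔ span {x ^ (j + 1)}) * M :=
          pow_succ M (j + 1) ▸ mul_mono_left ih
      _ = L * M ^ (j + 1) ⊔ (span {x ^ (j + 1)} * L ⊔ span {x ^ (j + 2)}) := by
          rw [Ideal.sup_mul, mul_assoc, ← pow_succ, Ideal.mul_sup,
            span_singleton_mul_span_singleton, ← pow_succ]
      _ ≤ L * M ^ (j + 1) ⊔ span {x ^ (j + 2)} := sup_le le_sup_left (sup_le_sup_right hxL _)

theorem isReductionOf_sup_span_of_mem_intClosure {L : Ideal R} {x : R} (hx : x ∈ intClosure L) :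
    IsReductionOf L (L ⊔ Ideal.span {x}) := by
  obtain ⟨k, a, hk, ha, he⟩ := hx
  obtain ⟨j, rfl⟩ : ∃ j, k = j + 1 := ⟨k - 1, by omega⟩
  set M := L ⊔ Ideal.span {x}
  have hxk : x ^ (j + 1) ∈ L * M ^ j := by
    rw [show x ^ (j + 1) = -∑ i ∈ Finset.Icc 1 (j + 1), a i * x ^ (j + 1 - i) by
      linear_combination he]
    refine neg_mem (Submodule.sum_mem _ fun i hi => ?_)
    obtain ⟨hi1, hij⟩ := Finset.mem_Icc.mp hi
    obtain ⟨i, rfl⟩ : ∃ i', i = i' + 1 := ⟨i - 1, by omega⟩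
    have hLi : L ^ (i + 1) ≤ L * M ^ i := by
      rw [pow_succ']; exact Ideal.mul_mono_right (Ideal.pow_right_mono le_sup_left i)
    have := Ideal.mul_mem_mul (hLi (ha _ hi))
      (Ideal.pow_mem_pow (show x ∈ M from Ideal.mem_sup_right (Ideal.mem_span_singleton_self x))
        (j - i))
    rw [Nat.add_sub_add_right]
    rwa [mul_assoc, ← pow_add, Nat.add_sub_cancel' (by omega : i ≤ j)] at this
  have hM : M ^ (j + 1) = L * M ^ j := by
    refine le_antisymm ?_ (pow_succ' M j ▸ Ideal.mul_mono_left le_sup_left)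
    refine (Ideal.sup_span_singleton_pow_succ_le L x j).trans (sup_le le_rfl ?_)
    rwa [Ideal.span_le, Set.singleton_subset_iff]
  exact ⟨le_sup_left, j + 1, j.succ_pos,
    Ideal.pow_succ_eq_mul_pow_of_le (r := j) hM (Nat.le_succ j)⟩

theorem intClosure_mono {K L : Ideal R} (h : K ≤ L) : intClosure K ⊆ intClosure L :=
  fun _ ⟨k, a, hk, ha, he⟩ => ⟨k, a, hk, fun i hi => Ideal.pow_right_mono h i (ha i hi), he⟩

theorem IsReductionOf.intClosure_eq [IsNoetherianRing R] {I J : Ideal R}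
    (h : IsReductionOf J I) : intClosure I = intClosure J := by
  refine (intClosure_mono h.1).antisymm' fun x hx => ?_
  exact mem_intClosure_of_isReductionOf (IsNoetherian.noetherian _)
    ((isReductionOf_sup_span_of_mem_intClosure hx).trans h)
    (Ideal.mem_sup_right (Ideal.mem_span_singleton_self x))

theorem lojExp_congr {m I J : Ideal R}
    (h : ∀ q, 0 < q → intClosure (I ^ q) = intClosure (J ^ q)) :
    lojExp m I = lojExp m J := by
  unfold lojExp
  congr 1
  ext
  refine exists₂_congr fun p q => and_congr_right fun _ => and_congr_right fun hq => ?_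
  rw [h q hq]

end

theorem lojExp_eq_of_isReduction_general {R : Type*} [CommRing R] [IsNoetherianRing R]
    [IsLocalRing R] (I J : Ideal R)
    (hJI : IsReductionOf J I) :
    lojExp (IsLocalRing.maximalIdeal R) I = lojExp (IsLocalRing.maximalIdeal R) J :=
  lojExp_congr fun _ hq => (hJI.pow hq).intClosure_eq

/-- If `(R, 𝔪)` is a Noetherian local ring, `I` an `𝔪`-primary ideal and `J` a reduction
of `I`, then the Łojasiewicz exponents of `I` and `J` coincide. -/
theorem lojExp_eq_of_isReduction {R : Type*} [CommRing R] [IsNoetherianRing R]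
    [IsLocalRing R] (I J : Ideal R) (hI : I.radical = IsLocalRing.maximalIdeal R)
    (hJI : IsReductionOf J I) :
    lojExp (IsLocalRing.maximalIdeal R) I = lojExp (IsLocalRing.maximalIdeal R) J :=
  lojExp_eq_of_isReduction_general I J hJI
end

section
/- Let U ⊆ ℂⁿ be an open connected neighbourhood of 0, let f = (f_0, …, f_m) ≠ 0 be a sequence of holomorphic functions on U, let S = {x ∈ U : f(x) = 0}, and let π : Y → U be the elementary blowing-up of U by means of f_0, …, f_m. Then π is proper, its range is U, and the restriction of π to Y ∖ π^{-1}(S) is a biholomorphism onto U ∖ S. -/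
open Filter Topology

noncomputable section

/-- `ℂⁿ` as a complex normed space. -/
abbrev ℂn (n : ℕ) : Type := EuclideanSpace ℂ (Fin n)

/-- The complex projective space `ℙᵐ` of lines in `ℂ^{m+1}`. -/
abbrev PP (m : ℕ) : Type := Projectivization ℂ (Fin (m + 1) → ℂ)

/-- The quotient topology on projective space `ℙᵐ`. -/
instance (m : ℕ) : TopologicalSpace (PP m) :=
  instTopologicalSpaceQuotient

/-- The centre `S = {x ∈ U : f(x) = 0}` of the blowing-up. -/
def Sf {n m : ℕ} (U : Set (ℂn n)) (f : Fin (m + 1) → ℂn n → ℂ) : Set (ℂn n) :=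
  {x ∈ U | ∀ i, f i x = 0}

/-- The incidence set
`E(f) = {(x,u) ∈ U × ℙᵐ : f_i(x)u_j = f_j(x)u_i, i,j = 0,…,m}` (the condition is stated
for the chosen representative `u = [u_0 : ⋯ : u_m]` of the projective point; it does not
depend on this choice). -/
def Ef {n m : ℕ} (U : Set (ℂn n)) (f : Fin (m + 1) → ℂn n → ℂ) : Set (ℂn n × PP m) :=
  {p | p.1 ∈ U ∧ ∀ i j, f i p.1 * p.2.rep j = f j p.1 * p.2.rep i}

/-- The total space `Y` of the elementary blowing-up of `U` by means of `f_0, …, f_m`: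
the closure in `U × ℙᵐ` of the part of `E(f)` lying over `U ∖ S`.  The blowing-up itself
is the natural projection `π : Y → U`, i.e. the restriction of the first projection. -/
def Yblow {n m : ℕ} (U : Set (ℂn n)) (f : Fin (m + 1) → ℂn n → ℂ) : Set (ℂn n × PP m) :=
  closure (Ef U f \ {p | p.1 ∈ Sf U f}) ∩ {p | p.1 ∈ U}

/-- The lift of a subset `A ⊆ ℂⁿ × ℙᵐ` to the tautological covering
`ℂⁿ × (ℂ^{m+1} ∖ {0})`. -/
def liftSet {n m : ℕ} (A : Set (ℂn n × PP m)) : Set (ℂn n × (Fin (m + 1) → ℂ)) :=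
  {q | ∃ h : q.2 ≠ 0, (q.1, Projectivization.mk ℂ q.2 h) ∈ A}

/-- `A` is an analytic subset of `Ω` (`Ω` a subset of a complex normed space `E`):
`A ⊆ Ω` and every point of `Ω` has an open neighbourhood `W` on which `A` is the common
zero set of finitely many holomorphic functions. -/
def IsAnalyticIn {E : Type*} [NormedAddCommGroup E] [NormedSpace ℂ E]
    (A Ω : Set E) : Prop :=
  A ⊆ Ω ∧ ∀ z ∈ Ω, ∃ W : Set E, IsOpen W ∧ z ∈ W ∧
    ∃ (N : ℕ) (g : Fin N → E → ℂ),
      (∀ i, ∀ w ∈ W, AnalyticAt ℂ (g i) w) ∧ A ∩ W = {w ∈ W | ∀ i, g i w = 0}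

/-- `A` is an analytic subset of `Ω ⊆ ℂⁿ × ℙᵐ`: the lift of `A` to the tautological
covering `ℂⁿ × (ℂ^{m+1} ∖ {0})` is an analytic subset of the lift of `Ω`. -/
def IsAnalyticSubsetOfProj {n m : ℕ} (A Ω : Set (ℂn n × PP m)) : Prop :=
  A ⊆ Ω ∧ IsAnalyticIn (liftSet A) (liftSet Ω)

/-- The blowing-up projection `π : Y → U`, the restriction of the first projection. -/
def blowPi {n m : ℕ} (U : Set (ℂn n)) (f : Fin (m + 1) → ℂn n → ℂ)
    (p : Yblow U f) : U :=
  ⟨p.1.1, p.2.2⟩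

/-- The restriction of the blowing-up projection `π` to `Y ∖ π⁻¹(S)`, as a map onto
`U ∖ S`. -/
def blowPiRes {n m : ℕ} (U : Set (ℂn n)) (f : Fin (m + 1) → ℂn n → ℂ)
    (p : ↥(Yblow U f \ {q | q.1 ∈ Sf U f})) : ↥(U \ Sf U f) :=
  ⟨p.1.1, p.2.1.2, p.2.2⟩

/-!
Over `U ∖ S` the incidence equations of `E(f)` say exactly that `u = [f(x)]`, so the part of
`E(f)` over `U ∖ S` is the graph of the continuous map `x ↦ [f(x)]` into the Hausdorff space
`ℙᵐ`; its closure therefore adds nothing over `U ∖ S`, and `π` is a homeomorphism there with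
inverse `x ↦ (x, [f(x)])`. Since `Y` is closed in `U × ℙᵐ` and `ℙᵐ` is compact, `π` is proper,
so its range is closed; it contains `U ∖ S`, which is dense in `U` by the identity theorem, as
`f ≢ 0` on the connected set `U`.
-/

theorem Projectivization.mk_eq_mk_iff_mul_eq_mul {K ι : Type*} [Field K] {v w : ι → K}
    (hv : v ≠ 0) (hw : w ≠ 0) :
    Projectivization.mk K v hv = Projectivization.mk K w hw ↔ ∀ i j, v i * w j = v j * w i := by
  rw [Projectivization.mk_eq_mk_iff']
  constructor
  · rintro ⟨a, rfl⟩ i j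
    simp only [Pi.smul_apply, smul_eq_mul]
    ring
  · intro h
    obtain ⟨k, hk⟩ : ∃ k, w k ≠ 0 := Function.ne_iff.mp hw
    refine ⟨v k / w k, funext fun j => ?_⟩
    simp only [Pi.smul_apply, smul_eq_mul]
    rw [div_mul_eq_mul_div, div_eq_iff hk]
    exact h k j

section ProjectiveSpace

variable {m : ℕ}

theorem isOpenQuotientMap_mk' :
    IsOpenQuotientMap (Projectivization.mk' ℂ : {v : Fin (m + 1) → ℂ // v ≠ 0} → PP m) := by
  refine ⟨Quotient.mk''_surjective, continuous_quot_mk, fun O hO => ?_⟩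
  have hsat : Projectivization.mk' ℂ ⁻¹' (Projectivization.mk' ℂ '' O) =
      ⋃ a : ℂˣ, (fun w : {v : Fin (m + 1) → ℂ // v ≠ 0} =>
        (⟨(a : ℂ) • (w : Fin (m + 1) → ℂ), smul_ne_zero a.ne_zero w.2⟩ :
          {v : Fin (m + 1) → ℂ // v ≠ 0})) ⁻¹' O := by
    ext ⟨w, hw⟩
    simp only [Set.mem_preimage, Set.mem_image, Set.mem_iUnion, Projectivization.mk'_eq_mk]
    constructor
    · rintro ⟨⟨o, ho⟩, hoO, how⟩
      obtain ⟨a, rfl⟩ := (Projectivization.mk_eq_mk_iff ℂ _ _ ho hw).1 how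
      exact ⟨a, hoO⟩
    · rintro ⟨a, ha⟩
      exact ⟨_, ha, (Projectivization.mk_eq_mk_iff ℂ _ _ _ hw).2 ⟨a, rfl⟩⟩
  show IsOpen (Projectivization.mk' ℂ ⁻¹' (Projectivization.mk' ℂ '' O))
  rw [hsat]
  exact isOpen_iUnion fun a => hO.preimage
    ((continuous_subtype_val.const_smul (a : ℂ)).subtype_mk _)

instance : T2Space (PP m) := by
  rw [t2Space_iff_of_isOpenQuotientMap isOpenQuotientMap_mk']
  simp only [Projectivization.mk'_eq_mk, Projectivization.mk_eq_mk_iff_mul_eq_mul,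
    Set.ofPred_forall]
  have hcoord : ∀ i, Continuous fun v : {v : Fin (m + 1) → ℂ // v ≠ 0} => (v : Fin (m + 1) → ℂ) i :=
    fun i => (continuous_apply i).comp continuous_subtype_val
  exact isClosed_iInter fun i => isClosed_iInter fun j => isClosed_eq
    (((hcoord i).comp continuous_fst).mul ((hcoord j).comp continuous_snd))
    (((hcoord j).comp continuous_fst).mul ((hcoord i).comp continuous_snd))

instance : CompactSpace (PP m) := by
  let g : Metric.sphere (0 : Fin (m + 1) → ℂ) 1 → PP m := fun v =>
    Projectivization.mk ℂ v (ne_zero_of_mem_unit_sphere v)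
  have hg : Continuous g := continuous_quot_mk.comp (continuous_subtype_val.subtype_mk _)
  have hsurj : Function.Surjective g := fun u => by
    have hrep : ‖u.rep‖ ≠ 0 := norm_ne_zero_iff.2 u.rep_nonzero
    refine ⟨⟨(‖u.rep‖⁻¹ : ℂ) • u.rep, ?_⟩, ?_⟩
    · simp [norm_smul, hrep]
    · conv_rhs => rw [← u.mk_rep]
      exact (Projectivization.mk_eq_mk_iff' ℂ _ _ _ _).2 ⟨_, rfl⟩
  exact ⟨hsurj.range_eq ▸ isCompact_range hg⟩

end ProjectiveSpace

section Topology

variable {X Y : Type*} [TopologicalSpace X] [TopologicalSpace Y]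

theorem snd_eq_of_mem_closure_graph [T2Space Y] {W : Set X} {g : W → Y} (hg : Continuous g)
    {p : X × Y} (hp : p ∈ closure (Set.range fun x : W => ((x : X), g x))) (hpW : p.1 ∈ W) :
    p.2 = g ⟨p.1, hpW⟩ := by
  set T : Set (X × Y) := {q | q.1 ∈ W}
  set graph := Set.range fun x : W => ((x : X), g x)
  let Ψ : T → Y × Y := fun q => (q.1.2, g ⟨q.1.1, q.2⟩)
  have hΨ : Continuous Ψ := (continuous_snd.comp continuous_subtype_val).prodMk
    (hg.comp ((continuous_fst.comp continuous_subtype_val).subtype_mk _))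
  have hgraph : Subtype.val ⁻¹' graph ⊆ Ψ ⁻¹' Set.diagonal Y := by
    rintro ⟨q, _⟩ ⟨x, rfl⟩
    rfl
  have hpT : (⟨p, hpW⟩ : T) ∈ closure (Subtype.val ⁻¹' graph) := by
    rw [closure_subtype, Subtype.image_preimage_coe,
      Set.inter_eq_right.2 (Set.range_subset_iff.2 fun x => x.2)]
    exact hp
  exact (isClosed_diagonal.preimage hΨ).closure_subset_iff.2 hgraph hpT

theorem isProperMap_restrict_fst [CompactSpace Y] {C : Set (X × Y)} (hC : IsClosed C)
    (U : Set X) : IsProperMap fun p : ↥(C ∩ {p | p.1 ∈ U}) => (⟨p.1.1, p.2.2⟩ : U) := by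
  have hincl : Topology.IsClosedEmbedding
      (Set.inclusion (Set.inter_subset_right : C ∩ Prod.fst ⁻¹' U ⊆ Prod.fst ⁻¹' U)) :=
    .inclusion _ (by simpa using hC.preimage continuous_subtype_val)
  exact (isProperMap_fst_of_compactSpace.restrictPreimage U).comp hincl.isProperMap

end Topology

section BlowUp

variable {n m : ℕ} {U : Set (ℂn n)} {f : Fin (m + 1) → ℂn n → ℂ}

variable (U f) in
def projPoint (x : ↥(U \ Sf U f)) : PP m :=
  Projectivization.mk ℂ (fun i => f i x.1) (fun h0 => x.2.2 ⟨x.2.1, fun i => congrFun h0 i⟩)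

theorem continuous_projPoint (hf : ∀ i, ContinuousOn (f i) U) : Continuous (projPoint U f) :=
  continuous_quot_mk.comp
    ((continuous_pi fun i => ((hf i).mono Set.sdiff_subset).domRestrict).subtype_mk _)

theorem Ef_diff_eq_range :
    Ef U f \ {p | p.1 ∈ Sf U f} =
      Set.range fun x : ↥(U \ Sf U f) => ((x : ℂn n), projPoint U f x) := by
  ext ⟨x, u⟩
  constructor
  · rintro ⟨⟨hxU, hcross⟩, hxS⟩
    refine ⟨⟨x, hxU, hxS⟩, Prod.ext rfl ?_⟩
    conv_rhs => rw [← u.mk_rep]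
    exact (Projectivization.mk_eq_mk_iff_mul_eq_mul _ _).2 hcross
  · rintro ⟨x, hx⟩
    obtain ⟨rfl, rfl⟩ := Prod.ext_iff.1 hx
    exact ⟨⟨x.2.1, (Projectivization.mk_eq_mk_iff_mul_eq_mul _ _).1 (projPoint U f x).mk_rep.symm⟩,
      x.2.2⟩

theorem mk_projPoint_mem_Yblow (x : ↥(U \ Sf U f)) : ((x : ℂn n), projPoint U f x) ∈ Yblow U f :=
  ⟨subset_closure (Ef_diff_eq_range ▸ ⟨x, rfl⟩), x.2.1⟩

theorem snd_eq_projPoint_of_mem_Yblow (hf : ∀ i, ContinuousOn (f i) U) {p : ℂn n × PP m}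
    (hp : p ∈ Yblow U f) (hpS : p.1 ∉ Sf U f) : p.2 = projPoint U f ⟨p.1, hp.2, hpS⟩ :=
  snd_eq_of_mem_closure_graph (continuous_projPoint hf) (Ef_diff_eq_range ▸ hp.1) _

theorem dense_compl_Sf (hUo : IsOpen U) (hUc : IsPreconnected U)
    (hf : ∀ i, AnalyticOnNhd ℂ (f i) U) (hne : ∃ x ∈ U, ∃ i, f i x ≠ 0) :
    Dense {x : U | (x : ℂn n) ∉ Sf U f} := by
  rw [Subtype.dense_iff]
  intro x hx
  by_contra hxcl
  obtain ⟨y, hy, i, hfi⟩ := hne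
  have hvanish : f i =ᶠ[𝓝 x] 0 := by
    rw [mem_closure_iff_frequently, not_frequently] at hxcl
    filter_upwards [hxcl, hUo.mem_nhds hx] with z hz hzU
    by_contra hfz
    exact hz ⟨⟨z, hzU⟩, fun hzS => hfz (hzS.2 i), rfl⟩
  exact hfi ((hf i).eqOn_zero_of_preconnected_of_eventuallyEq_zero hUc hx hvanish hy)

theorem isProperMap_blowPi : IsProperMap (blowPi U f) :=
  isProperMap_restrict_fst isClosed_closure U

theorem surjective_blowPi (hUo : IsOpen U) (hUc : IsPreconnected U)
    (hf : ∀ i, AnalyticOnNhd ℂ (f i) U) (hne : ∃ x ∈ U, ∃ i, f i x ≠ 0) :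
    Function.Surjective (blowPi U f) := by
  have hsub : {x : U | (x : ℂn n) ∉ Sf U f} ⊆ Set.range (blowPi U f) :=
    fun x hx => ⟨⟨_, mk_projPoint_mem_Yblow ⟨x.1, x.2, hx⟩⟩, rfl⟩
  rw [← Set.range_eq_univ, ← isProperMap_blowPi.isClosed_range.closure_eq]
  exact dense_iff_closure_eq.1 ((dense_compl_Sf hUo hUc hf hne).mono hsub)

theorem isHomeomorph_blowPiRes (hf : ∀ i, ContinuousOn (f i) U) :
    IsHomeomorph (blowPiRes U f) :=
  Homeomorph.isHomeomorph
    { toFun := blowPiRes U f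
      invFun := fun x => ⟨(x, projPoint U f x), mk_projPoint_mem_Yblow x, x.2.2⟩
      left_inv := fun p =>
        Subtype.ext (Prod.ext rfl (snd_eq_projPoint_of_mem_Yblow hf p.2.1 p.2.2).symm)
      right_inv := fun _ => rfl
      continuous_toFun := (continuous_fst.comp continuous_subtype_val).subtype_mk _
      continuous_invFun := (continuous_subtype_val.prodMk (continuous_projPoint hf)).subtype_mk _ }

end BlowUp

theorem blowup_proper_surjective_biholomorphic_general (n m : ℕ)
    (U : Set (ℂn n)) (hUo : IsOpen U) (hUc : IsConnected U)
    (f : Fin (m + 1) → ℂn n → ℂ) (hf : ∀ i, ∀ x ∈ U, AnalyticAt ℂ (f i) x)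
    (hne : ∃ x ∈ U, ∃ i, f i x ≠ 0) :
    IsProperMap (blowPi U f) ∧
    Function.Surjective (blowPi U f) ∧
    IsHomeomorph (blowPiRes U f) ∧
    ∀ x : ↥(U \ Sf U f),
      ∀ p : ↥(Yblow U f \ {q | q.1 ∈ Sf U f}),
        blowPiRes U f p = x →
        (p : ℂn n × PP m) =
          (x.1, Projectivization.mk ℂ (fun i => f i x.1)
            (fun h0 => x.2.2 ⟨x.2.1, fun i => congrFun h0 i⟩)) := by
  have hfc : ∀ i, ContinuousOn (f i) U := fun i => AnalyticOnNhd.continuousOn (hf i)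
  refine ⟨isProperMap_blowPi, surjective_blowPi hUo hUc.isPreconnected hf hne,
    isHomeomorph_blowPiRes hfc, ?_⟩
  rintro x p rfl
  exact Prod.ext rfl (snd_eq_projPoint_of_mem_Yblow hfc p.2.1 p.2.2)

/-- **Proposition (ii).**  The blowing-up projection `π : Y → U` is proper, its range is
`U`, and its restriction to `Y ∖ π⁻¹(S)` is a biholomorphism onto `U ∖ S`: it is a
homeomorphism onto `U ∖ S` whose inverse is the holomorphic map
`x ↦ (x, [f_0(x) : ⋯ : f_m(x)])` (while `π` itself is the restriction of a linear
projection, hence holomorphic). -/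
theorem blowup_proper_surjective_biholomorphic (n m : ℕ)
    (U : Set (ℂn n)) (hUo : IsOpen U) (hUc : IsConnected U) (hU0 : (0 : ℂn n) ∈ U)
    (f : Fin (m + 1) → ℂn n → ℂ) (hf : ∀ i, ∀ x ∈ U, AnalyticAt ℂ (f i) x)
    (hne : ∃ x ∈ U, ∃ i, f i x ≠ 0) :
    IsProperMap (blowPi U f) ∧
    Function.Surjective (blowPi U f) ∧
    IsHomeomorph (blowPiRes U f) ∧
    ∀ x : ↥(U \ Sf U f),
      ∀ p : ↥(Yblow U f \ {q | q.1 ∈ Sf U f}),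
        blowPiRes U f p = x →
        (p : ℂn n × PP m) =
          (x.1, Projectivization.mk ℂ (fun i => f i x.1)
            (fun h0 => x.2.2 ⟨x.2.1, fun i => congrFun h0 i⟩)) :=
  blowup_proper_surjective_biholomorphic_general n m U hUo hUc f hf hne

end
end
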